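/- arXiv:math/0508510 — 2 statements merged into one kernel-verified Lean document; each statement's English description precedes it below -/
import Mathlib

section
/- Let N ≥ 1 be an integer and let S = Σ_{i=0}^{N−1} X^i Y^{N−1−i} in the polynomial ring ℚ[X,Y]. Then the quotient of ℚ[X,Y] by the ideal generated by X^N, Y^N, S, and X is isomorphic as a ℚ-algebra to ℚ[Y]/(Y^{N−1}). -/
/-!
Setting `X = 0` identifies `ℚ[X,Y]/(X)` with `ℚ[Y]`. Since the ideal contains `X`, the quotient
is `ℚ[Y]` modulo the images `0, Y^N, Y^(N-1), 0` of the generators, and these generate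
`(Y^(N-1))` (for `N = 0` both rings are zero).
-/

open MvPolynomial

noncomputable def Ideal.quotientEquivQuotientMapOfKerLe {R A B : Type*} [CommSemiring R]
    [CommRing A] [CommRing B] [Algebra R A] [Algebra R B] {f : A →ₐ[R] B}
    (hf : Function.Surjective f) {I : Ideal A} (hI : RingHom.ker f ≤ I) :
    (A ⧸ I) ≃ₐ[R] B ⧸ I.map f :=
  have hg : Function.Surjective ((Ideal.Quotient.mkₐ R (I.map f)).comp f) :=
    (Ideal.Quotient.mkₐ_surjective R _).comp hf
  have hker : I = RingHom.ker ((Ideal.Quotient.mkₐ R (I.map f)).comp f) := by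
    change I = RingHom.ker ((Ideal.Quotient.mk (I.map f)).comp (f : A →+* B))
    rw [← RingHom.comap_ker, Ideal.mk_ker, Ideal.comap_coe,
      Ideal.comap_map_of_surjective' _ hf, sup_eq_left.mpr hI]
  (Ideal.quotientEquivAlgOfEq R hker).trans (Ideal.quotientKerAlgEquivOfSurjective hg)

section

variable {R : Type*} [CommRing R]

noncomputable def evalZeroX : MvPolynomial (Fin 2) R →ₐ[R] Polynomial R :=
  aeval ![0, Polynomial.X]

@[simp] lemma evalZeroX_X_zero : evalZeroX (X 0 : MvPolynomial (Fin 2) R) = 0 := by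
  simp [evalZeroX]

@[simp] lemma evalZeroX_X_one : evalZeroX (X 1 : MvPolynomial (Fin 2) R) = Polynomial.X := by
  simp [evalZeroX]

lemma evalZeroX_comp_aeval_X_one :
    evalZeroX.comp (Polynomial.aeval (X 1 : MvPolynomial (Fin 2) R)) = AlgHom.id R _ :=
  Polynomial.algHom_ext (by simp)

lemma evalZeroX_surjective : Function.Surjective (evalZeroX : MvPolynomial (Fin 2) R →ₐ[R] _) :=
  fun p => ⟨Polynomial.aeval (X 1) p, congrArg (· p) evalZeroX_comp_aeval_X_one⟩

lemma ker_evalZeroX :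
    RingHom.ker (evalZeroX : MvPolynomial (Fin 2) R →ₐ[R] _) = Ideal.span {X 0} := by
  refine le_antisymm (fun p hp => ?_) (Ideal.span_le.mpr (by simp))
  have hmk : (Ideal.Quotient.mkₐ R (Ideal.span {X 0})).comp
      ((Polynomial.aeval (X 1)).comp evalZeroX) = Ideal.Quotient.mkₐ R _ := by
    refine MvPolynomial.algHom_ext fun i => ?_
    fin_cases i <;> simp
  rw [← Ideal.Quotient.eq_zero_iff_mem, ← Ideal.Quotient.mkₐ_eq_mk R, ← hmk]
  simp [(RingHom.mem_ker).mp hp]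

lemma map_evalZeroX_span (N : ℕ) (S : MvPolynomial (Fin 2) R)
    (hS : S = ∑ i ∈ Finset.range N, X 0 ^ i * X 1 ^ (N - 1 - i)) :
    (Ideal.span {X 0 ^ N, X 1 ^ N, S, X 0}).map evalZeroX =
      Ideal.span {Polynomial.X ^ (N - 1)} := by
  rw [Ideal.map_span]
  cases N with
  | zero => simp [Set.image_insert_eq, hS]
  | succ M =>
    have hSX : evalZeroX S = Polynomial.X ^ M := by simp [hS, Finset.sum_range_succ']
    refine le_antisymm (Ideal.span_le.mpr ?_) (Ideal.span_mono ?_) <;>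
      simp [Set.insert_subset_iff, Ideal.mem_span_singleton, hSX, pow_dvd_pow]

end

open MvPolynomial in
theorem reduced_theta_homology_general (N : ℕ)
    (S : MvPolynomial (Fin 2) ℚ)
    (hS : S = ∑ i ∈ Finset.range N, X (0 : Fin 2) ^ i * X (1 : Fin 2) ^ (N - 1 - i)) :
    Nonempty ((MvPolynomial (Fin 2) ℚ ⧸
        Ideal.span {X (0 : Fin 2) ^ N, X (1 : Fin 2) ^ N, S, X (0 : Fin 2)}) ≃ₐ[ℚ]
      (Polynomial ℚ ⧸ Ideal.span {(Polynomial.X : Polynomial ℚ) ^ (N - 1)})) := by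
  have hker : RingHom.ker evalZeroX ≤ Ideal.span {X 0 ^ N, X 1 ^ N, S, X 0} :=
    ker_evalZeroX.trans_le (Ideal.span_mono (by simp))
  exact ⟨(Ideal.quotientEquivQuotientMapOfKerLe evalZeroX_surjective hker).trans
    (Ideal.quotientEquivAlgOfEq ℚ (map_evalZeroX_span N S hS))⟩

open MvPolynomial in
/-- For `N ≥ 1` and `S = Σ_{i=0}^{N−1} X^i Y^{N−1−i}`, the quotient
`ℚ[X,Y]/(X^N, Y^N, S, X)` is isomorphic as a `ℚ`-algebra to `ℚ[Y]/(Y^{N−1})`. -/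
theorem reduced_theta_homology (N : ℕ) (hN : 1 ≤ N)
    (S : MvPolynomial (Fin 2) ℚ)
    (hS : S = ∑ i ∈ Finset.range N, X (0 : Fin 2) ^ i * X (1 : Fin 2) ^ (N - 1 - i)) :
    Nonempty ((MvPolynomial (Fin 2) ℚ ⧸
        Ideal.span {X (0 : Fin 2) ^ N, X (1 : Fin 2) ^ N, S, X (0 : Fin 2)}) ≃ₐ[ℚ]
      (Polynomial ℚ ⧸ Ideal.span {(Polynomial.X : Polynomial ℚ) ^ (N - 1)})) :=
  reduced_theta_homology_general N S hS
end

section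
/- Let N ≥ 1 be an integer and let S = Σ_{i=0}^{N−1} X^i Y^{N−1−i} in ℚ[X,Y]. Then: (1) the ideal of ℚ[X,Y] generated by X^N, Y^N and S equals the ideal generated by X^N and S (since X^N − Y^N = (X−Y)·S, so Y^N lies in the ideal (X^N, S)); and (2) the quotient ring A = ℚ[X,Y]/(X^N, Y^N, S), viewed as a module over ℚ[X]/(X^N) via the algebra map sending X to the class of X, is a free module with basis given by the images of 1, Y, …, Y^{N−2}; in particular it is free of rank N−1. -/
/-!
Since `X^N - Y^N = (X - Y) S`, the relation `Y^N` is redundant. Over `R = ℚ[X]/(X^N)` the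
quotient is therefore `R[Y]/(S(x, Y))` with `x` the class of `X`, and `S(x, Y)` is monic of
degree `N - 1` in `Y`, because multiplied by the monic `Y - x` it becomes `Y^N - x^N`.
Adjoining a root of a monic polynomial of degree `N - 1` gives a free module with power basis
`1, Y, …, Y^(N-2)`.
-/

section GeomSum
variable {A : Type*} [CommRing A]

theorem pow_mem_span_pow_geom_sum₂ (x y : A) (n : ℕ) :
    y ^ n ∈ Ideal.span {x ^ n, ∑ i ∈ Finset.range n, x ^ i * y ^ (n - 1 - i)} := by
  have h : y ^ n = x ^ n - (∑ i ∈ Finset.range n, x ^ i * y ^ (n - 1 - i)) * (x - y) := by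
    rw [geom_sum₂_mul]; ring
  rw [h]
  exact sub_mem (Ideal.subset_span (by simp))
    (Ideal.mul_mem_right _ _ (Ideal.subset_span (by simp)))

theorem Ideal.span_pow_pow_geom_sum₂ (x y : A) (n : ℕ) :
    Ideal.span {x ^ n, y ^ n, ∑ i ∈ Finset.range n, x ^ i * y ^ (n - 1 - i)}
      = Ideal.span {x ^ n, ∑ i ∈ Finset.range n, x ^ i * y ^ (n - 1 - i)} := by
  rw [Set.insert_comm]
  exact Submodule.span_insert_eq_span (pow_mem_span_pow_geom_sum₂ x y n)

end GeomSum

namespace Polynomial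
variable {R : Type*} [CommRing R] (r : R) (n : ℕ)

/-- `S(r, Y)`, read as a polynomial in `Y`. -/
noncomputable def geomSum₂XC : R[X] := ∑ i ∈ Finset.range n, X ^ i * C r ^ (n - 1 - i)

theorem geomSum₂XC_mul_X_sub_C : geomSum₂XC r n * (X - C r) = X ^ n - C (r ^ n) := by
  rw [geomSum₂XC, geom_sum₂_mul, C_pow]

theorem monic_geomSum₂XC {n : ℕ} (hn : n ≠ 0) : (geomSum₂XC r n).Monic :=
  (monic_X_sub_C r).of_mul_monic_right <| by
    rw [geomSum₂XC_mul_X_sub_C]; exact monic_X_pow_sub_C _ hn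

theorem natDegree_geomSum₂XC [Nontrivial R] {n : ℕ} (hn : n ≠ 0) :
    (geomSum₂XC r n).natDegree = n - 1 := by
  have h := congrArg natDegree (geomSum₂XC_mul_X_sub_C r n)
  rw [(monic_geomSum₂XC r hn).natDegree_mul (monic_X_sub_C r), natDegree_X_sub_C,
    natDegree_X_pow_sub_C] at h
  omega

theorem eval₂_geomSum₂XC {A : Type*} [CommSemiring A] (f : R →+* A) (y : A) :
    (geomSum₂XC r n).eval₂ f y = ∑ i ∈ Finset.range n, y ^ i * f r ^ (n - 1 - i) := by
  simp [geomSum₂XC, eval₂_finsetSum, eval₂_pow]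

theorem nontrivial_quotient_span_X_pow [Nontrivial R] {n : ℕ} (hn : n ≠ 0) :
    Nontrivial (R[X] ⧸ Ideal.span {(X : R[X]) ^ n}) := by
  rw [Ideal.Quotient.nontrivial_iff, Ne, Ideal.span_singleton_eq_top, isUnit_pow_iff hn]
  exact not_isUnit_X

end Polynomial

theorem Module.Basis.exists_map_ringEquiv_compHom {ι R B A : Type*} [CommSemiring R]
    [Semiring B] [Algebra R B] [Semiring A] (φ : R →+* A) (e : B ≃+* A)
    (he : ∀ r, e (algebraMap R B r) = φ r) (b : Module.Basis ι R B) :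
    letI := Module.compHom A φ
    ∃ b' : Module.Basis ι R A, ∀ i, b' i = e (b i) := by
  let := Module.compHom A φ
  let L : B ≃ₗ[R] A :=
    { e with map_smul' := fun r x => by simp [Algebra.smul_def, he]; rfl }
  exact ⟨b.map L, fun i => rfl⟩

section Theta
open MvPolynomial
variable (K : Type*) [CommRing K] (N : ℕ)

noncomputable abbrev thetaRel : MvPolynomial (Fin 2) K :=
  ∑ i ∈ Finset.range N, X 0 ^ i * X 1 ^ (N - 1 - i)

noncomputable abbrev thetaIdeal : Ideal (MvPolynomial (Fin 2) K) :=
  Ideal.span {X 0 ^ N, X 1 ^ N, thetaRel K N}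

variable {K N}

theorem thetaIdeal_le_ker_aeval {B : Type*} [CommRing B] [Algebra K B] {x y : B}
    (hx : x ^ N = 0) (hxy : ∑ i ∈ Finset.range N, x ^ i * y ^ (N - 1 - i) = 0) :
    thetaIdeal K N ≤ RingHom.ker (aeval (R := K) ![x, y]) := by
  rw [thetaIdeal, Ideal.span_pow_pow_geom_sum₂, Ideal.span_le, Set.insert_subset_iff,
    Set.singleton_subset_iff]
  simp [hx, hxy]

theorem exists_algEquiv_adjoinRoot_geomSum₂XC
    (φ : (Polynomial K ⧸ Ideal.span {(Polynomial.X : Polynomial K) ^ N}) →ₐ[K]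
      MvPolynomial (Fin 2) K ⧸ thetaIdeal K N)
    (hφ : φ (Ideal.Quotient.mk _ Polynomial.X) = Ideal.Quotient.mk _ (X 0)) :
    ∃ e : AdjoinRoot (Polynomial.geomSum₂XC (Ideal.Quotient.mk _ Polynomial.X) N) ≃ₐ[K]
        MvPolynomial (Fin 2) K ⧸ thetaIdeal K N,
      (∀ r, e (AdjoinRoot.of _ r) = φ r) ∧ e (AdjoinRoot.root _) = Ideal.Quotient.mk _ (X 1) := by
  set r := Ideal.Quotient.mk (Ideal.span {(Polynomial.X : Polynomial K) ^ N}) Polynomial.X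
  set p := Polynomial.geomSum₂XC r N
  have hroot : p.eval₂ φ.toRingHom (Ideal.Quotient.mk _ (X 1)) = 0 := by
    have hS : Ideal.Quotient.mk (thetaIdeal K N) (thetaRel K N) = 0 :=
      Ideal.Quotient.eq_zero_iff_mem.2 (Ideal.subset_span (by simp))
    rw [Polynomial.eval₂_geomSum₂XC, AlgHom.toRingHom_eq_coe, RingHom.coe_coe, hφ,
      geom_sum₂_comm]
    simpa using hS
  have hrN : r ^ N = 0 := by
    rw [← map_pow]
    exact Ideal.Quotient.eq_zero_iff_mem.2 (Ideal.mem_span_singleton_self _)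
  have hker := thetaIdeal_le_ker_aeval (K := K) (x := AdjoinRoot.of p r) (y := AdjoinRoot.root p)
    (by rw [← map_pow, hrN, map_zero])
    (by rw [geom_sum₂_comm, ← Polynomial.eval₂_geomSum₂XC, AdjoinRoot.eval₂_root])
  let fwd := AdjoinRoot.liftAlgHom p φ _ hroot
  let bwd := Ideal.Quotient.liftₐ _ _ hker
  have hfwd_of : ∀ a, fwd (AdjoinRoot.of p a) = φ a := AdjoinRoot.liftAlgHom_of p φ _ hroot
  have hfwd_root : fwd (AdjoinRoot.root p) = Ideal.Quotient.mk _ (X 1) :=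
    AdjoinRoot.liftAlgHom_root p φ _ hroot
  have hbwd : ∀ q, bwd (Ideal.Quotient.mk _ q) = aeval ![AdjoinRoot.of p r, AdjoinRoot.root p] q :=
    fun q => rfl
  refine ⟨AlgEquiv.ofAlgHom fwd bwd ?_ ?_, hfwd_of, hfwd_root⟩
  · refine Ideal.Quotient.algHom_ext _ (MvPolynomial.algHom_ext fun i => ?_)
    fin_cases i <;> simp [hfwd_of, hfwd_root, hbwd, hφ]
  · refine AdjoinRoot.algHom_ext' (Ideal.Quotient.algHom_ext _ (Polynomial.algHom_ext ?_)) ?_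
    · change bwd (fwd (AdjoinRoot.of p r)) = AdjoinRoot.of p r
      simp [hfwd_of, hφ, hbwd]
    · simp [hfwd_root, hbwd]

end Theta

open MvPolynomial in
/-- For `N ≥ 1` and `S = Σ_{i=0}^{N−1} X^i Y^{N−1−i}` in `ℚ[X,Y]`:
(1) the ideal `(X^N, Y^N, S)` equals the ideal `(X^N, S)`; and
(2) the quotient `A = ℚ[X,Y]/(X^N, Y^N, S)`, viewed as a module over `ℚ[X]/(X^N)` via the
algebra map sending `X` to the class of `X`, is free with basis the images of
`1, Y, …, Y^{N−2}`. -/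
theorem theta_ideal_and_freeness (N : ℕ) (hN : 1 ≤ N)
    (S : MvPolynomial (Fin 2) ℚ)
    (hS : S = ∑ i ∈ Finset.range N, X (0 : Fin 2) ^ i * X (1 : Fin 2) ^ (N - 1 - i)) :
    Ideal.span {X (0 : Fin 2) ^ N, X (1 : Fin 2) ^ N, S}
      = Ideal.span {X (0 : Fin 2) ^ N, S} ∧
    ∀ (φ : (Polynomial ℚ ⧸ Ideal.span {(Polynomial.X : Polynomial ℚ) ^ N}) →ₐ[ℚ]
        (MvPolynomial (Fin 2) ℚ ⧸
          Ideal.span {X (0 : Fin 2) ^ N, X (1 : Fin 2) ^ N, S})),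
      φ (Ideal.Quotient.mk _ Polynomial.X) = Ideal.Quotient.mk _ (X (0 : Fin 2)) →
      letI := Module.compHom
        (MvPolynomial (Fin 2) ℚ ⧸ Ideal.span {X (0 : Fin 2) ^ N, X (1 : Fin 2) ^ N, S})
        φ.toRingHom
      ∃ b : Module.Basis (Fin (N - 1)) (Polynomial ℚ ⧸ Ideal.span {(Polynomial.X : Polynomial ℚ) ^ N})
          (MvPolynomial (Fin 2) ℚ ⧸ Ideal.span {X (0 : Fin 2) ^ N, X (1 : Fin 2) ^ N, S}),
        ∀ i : Fin (N - 1), b i = Ideal.Quotient.mk _ (X (1 : Fin 2) ^ (i : ℕ)) := by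
  subst hS
  refine ⟨Ideal.span_pow_pow_geom_sum₂ _ _ N, fun φ hφ => ?_⟩
  obtain ⟨e, he_of, he_root⟩ := exists_algEquiv_adjoinRoot_geomSum₂XC φ hφ
  have hmonic := Polynomial.monic_geomSum₂XC
    (Ideal.Quotient.mk (Ideal.span {(Polynomial.X : Polynomial ℚ) ^ N}) Polynomial.X)
    (n := N) (by omega)
  obtain ⟨b, hb⟩ := Module.Basis.exists_map_ringEquiv_compHom φ.toRingHom e.toRingEquiv
    (fun a => he_of a) (AdjoinRoot.powerBasis' hmonic).basis
  have := Polynomial.nontrivial_quotient_span_X_pow (R := ℚ) (n := N) (by omega)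
  let := Module.compHom (MvPolynomial (Fin 2) ℚ ⧸ thetaIdeal ℚ N) φ.toRingHom
  refine ⟨b.reindex (finCongr (Polynomial.natDegree_geomSum₂XC _ (by omega))), fun i => ?_⟩
  simp [hb, he_root]
  rfl
end
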